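/- Let k be an algebraically closed field of characteristic zero. A 2-dimensional linear subspace W ⊆ k^6 is contained in the zero locus of the three quadratic forms x_3² − 2x_2² + x_1² − 2x_0², x_4² − 2x_3² + x_2² − 2x_0², x_5² − 2x_4² + x_3² − 2x_0² if and only if there exists a sign vector ε = (ε_1,…,ε_5) ∈ {±1}^5 such that W is the span of the vectors (0, ε_1, ε_2, ε_3, ε_4, ε_5) and (1, 1·ε_1, 2·ε_2, 3·ε_3, 4·ε_4, 5·ε_5). In particular, the Büchi K3 surface X_5 contains exactly 32 lines, namely the lines with affine parametric equations x_0 = 1, x_i = ε_i(t+i) for i = 1,…,5. -/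

import Mathlib

/-!
By polarization, the quadrics vanish on `W` iff for all `x, y ∈ W` the sequence `x_i y_i`,
`i = 1, …, 5`, has constant second difference `2 x₀ y₀`, i.e. is a quadratic polynomial in `i` with
leading coefficient `x₀ y₀`. Choose `u ≠ 0` in `W` with `u₀ = 0`.

If some `w ∈ W` has `w₀ = 1`, the identity `u_i² · w_i² = (u_i w_i)²` at `i = 3, 4` forces every
`u_i²` to equal `n²`, where `n` is the slope of the linear sequence `u_i w_i`. Hence
`u = n · (0, ε)` with signs `ε_i = u_i / n`, and `w_i = ε_i (c + i)` for a constant `c`, so `W` is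
spanned by `(0, ε)` and `(1, i ε_i)`.

If `W ⊆ {x₀ = 0}`, all the sequences `x_i y_i` are linear in `i`, and then
`(u_i w_j - u_j w_i)² = (s + t - 2st) (u₁w₂ - u₂w₁)²` with `s = i - 1`, `t = j - 1`. Taking
`i = j = 3` kills `u₁w₂ - u₂w₁`, hence every `2 × 2` minor of `(u, w)`, so `W` would be a line.

Conversely, on `a (0, ε) + b (1, i ε_i)` one has `x_i² = (a + i b)²`, whose second difference is
`2b² = 2x₀²`.
-/

/-- The first spanning vector `(0, ε₁, ε₂, ε₃, ε₄, ε₅)` of the line `L_ε`. -/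
def buchiLineDir {k : Type*} [Field k] (ε : Fin 5 → k) : Fin 6 → k :=
  ![0, ε 0, ε 1, ε 2, ε 3, ε 4]

/-- The second spanning vector `(1, 1·ε₁, 2·ε₂, 3·ε₃, 4·ε₄, 5·ε₅)` of the
line `L_ε`. -/
def buchiLinePt {k : Type*} [Field k] (ε : Fin 5 → k) : Fin 6 → k :=
  ![1, 1 * ε 0, 2 * ε 1, 3 * ε 2, 4 * ε 3, 5 * ε 4]

open Module Submodule

theorem Fin.exists_succ_ne_zero {M : Type*} [Zero M] {n : ℕ} {u : Fin (n + 1) → M}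
    (hu₀ : u 0 = 0) (hu : u ≠ 0) : ∃ j : Fin n, u j.succ ≠ 0 := by
  by_contra! h
  exact hu (funext fun i => Fin.cases hu₀ h i)

theorem exists_mem_ne_zero_apply_eq_zero {k V : Type*} [Field k] [AddCommGroup V] [Module k V]
    {W : Submodule k V} [FiniteDimensional k W] (hW : 1 < finrank k W) (f : V →ₗ[k] k) :
    ∃ u ∈ W, u ≠ 0 ∧ f u = 0 := by
  obtain ⟨x, hx, hx₀⟩ := exists_mem_ne_zero_of_ne_bot
    (LinearMap.ker_ne_bot_of_finrank_lt (f := f ∘ₗ W.subtype) (by simpa using hW))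
  exact ⟨x, x.2, by simpa using hx₀, hx⟩

section

variable {k : Type*} [Field k]

section Line

variable (ε : Fin 5 → k)

@[simp] theorem buchiLineDir_zero : buchiLineDir ε 0 = 0 := rfl

@[simp] theorem buchiLineDir_succ (j : Fin 5) : buchiLineDir ε j.succ = ε j := by
  fin_cases j <;> rfl

@[simp] theorem buchiLinePt_zero : buchiLinePt ε 0 = 1 := rfl

@[simp] theorem buchiLinePt_succ (j : Fin 5) : buchiLinePt ε j.succ = ((j : k) + 1) * ε j := by
  fin_cases j <;> simp [buchiLinePt] <;> norm_num

variable {ε}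

theorem finrank_span_buchiLine (hε : ε 0 ≠ 0) :
    finrank k (span k {buchiLineDir ε, buchiLinePt ε}) = 2 := by
  have hli : LinearIndependent k ![buchiLineDir ε, buchiLinePt ε] := by
    refine LinearIndependent.pair_iff.mpr fun s t hst => ?_
    have h₀ : t = 0 := by simpa using congrFun hst 0
    have h₁ : s * ε 0 + t * ε 0 = 0 := by
      simpa [buchiLineDir, buchiLinePt] using congrFun hst 1
    exact ⟨by simpa [h₀, hε] using h₁, h₀⟩
  rw [← Matrix.range_cons_cons_empty _ _ ![], finrank_span_eq_card hli, Fintype.card_fin]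

end Line

def IsBuchiOrtho (x y : Fin 6 → k) : Prop :=
  x 3 * y 3 - 2 * (x 2 * y 2) + x 1 * y 1 - 2 * (x 0 * y 0) = 0 ∧
  x 4 * y 4 - 2 * (x 3 * y 3) + x 2 * y 2 - 2 * (x 0 * y 0) = 0 ∧
  x 5 * y 5 - 2 * (x 4 * y 4) + x 3 * y 3 - 2 * (x 0 * y 0) = 0

theorem isBuchiOrtho_self_iff {v : Fin 6 → k} :
    IsBuchiOrtho v v ↔
      v 3 ^ 2 - 2 * v 2 ^ 2 + v 1 ^ 2 - 2 * v 0 ^ 2 = 0 ∧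
      v 4 ^ 2 - 2 * v 3 ^ 2 + v 2 ^ 2 - 2 * v 0 ^ 2 = 0 ∧
      v 5 ^ 2 - 2 * v 4 ^ 2 + v 3 ^ 2 - 2 * v 0 ^ 2 = 0 := by
  simp only [IsBuchiOrtho, sq]

theorem isBuchiOrtho_self_of_mem_span {ε : Fin 5 → k} (hε : ∀ j, ε j ^ 2 = 1) {v : Fin 6 → k}
    (hv : v ∈ span k {buchiLineDir ε, buchiLinePt ε}) : IsBuchiOrtho v v := by
  obtain ⟨a, b, rfl⟩ := mem_span_pair.mp hv
  rw [isBuchiOrtho_self_iff]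
  simp only [buchiLineDir, buchiLinePt, Matrix.smul_cons, smul_eq_mul, mul_zero,
    Matrix.smul_empty, mul_one, Pi.add_apply, Matrix.cons_val, Matrix.cons_val_one,
    Matrix.cons_val_zero, zero_add]
  refine ⟨?_, ?_, ?_⟩
  · linear_combination (a + 3 * b) ^ 2 * hε 2 - 2 * (a + 2 * b) ^ 2 * hε 1 + (a + b) ^ 2 * hε 0
  · linear_combination
      (a + 4 * b) ^ 2 * hε 3 - 2 * (a + 3 * b) ^ 2 * hε 2 + (a + 2 * b) ^ 2 * hε 1
  · linear_combination
      (a + 5 * b) ^ 2 * hε 4 - 2 * (a + 4 * b) ^ 2 * hε 3 + (a + 3 * b) ^ 2 * hε 2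

namespace IsBuchiOrtho

theorem of_add [CharZero k] {x y : Fin 6 → k} (hx : IsBuchiOrtho x x) (hy : IsBuchiOrtho y y)
    (hxy : IsBuchiOrtho (x + y) (x + y)) : IsBuchiOrtho x y := by
  obtain ⟨hx₁, hx₂, hx₃⟩ := hx
  obtain ⟨hy₁, hy₂, hy₃⟩ := hy
  obtain ⟨h₁, h₂, h₃⟩ := hxy
  simp only [Pi.add_apply] at h₁ h₂ h₃
  exact ⟨by linear_combination (h₁ - hx₁ - hy₁) / 2, by linear_combination (h₂ - hx₂ - hy₂) / 2,
    by linear_combination (h₃ - hx₃ - hy₃) / 2⟩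

theorem mul_apply_succ {x y : Fin 6 → k} (h : IsBuchiOrtho x y) (j : Fin 5) :
    x j.succ * y j.succ =
      x 1 * y 1 + (j : k) * (x 2 * y 2 - x 1 * y 1) + (j : k) * ((j : k) - 1) * (x 0 * y 0) := by
  obtain ⟨h₁, h₂, h₃⟩ := h
  fin_cases j
  · simp
  · simp
  all_goals simp only [Fin.reduceFinMk, Fin.reduceSucc, Nat.cast_ofNat]
  · linear_combination h₁
  · linear_combination h₂ + 2 * h₁
  · linear_combination h₃ + 2 * h₂ + 3 * h₁

variable {u w : Fin 6 → k}

theorem sq_apply_succ [CharZero k] (huu : IsBuchiOrtho u u) (huw : IsBuchiOrtho u w)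
    (hww : IsBuchiOrtho w w) (hu₀ : u 0 = 0) (hw₀ : w 0 = 1) (j : Fin 5) :
    u j.succ ^ 2 = (u 2 * w 2 - u 1 * w 1) ^ 2 := by
  have rank_one (j : Fin 5) :
      (u j.succ * u j.succ) * (w j.succ * w j.succ) = (u j.succ * w j.succ) ^ 2 := by ring
  have e₂ := rank_one 2
  have e₃ := rank_one 3
  rw [huu.mul_apply_succ, huw.mul_apply_succ, hww.mul_apply_succ, hu₀, hw₀] at e₂ e₃
  norm_num at e₂ e₃
  -- `e_j` says `j (j - 1) (A' j + A - D²) = 0`, where `A = u₁²`, `A' = u₂² - u₁²`,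
  -- `D = u₁w₂ - u₂w₁`; moreover `(u₂w₂ - u₁w₁)² = D² + A' (w₂² - w₁²)`.
  have hA' : u 2 * u 2 = u 1 * u 1 := by linear_combination e₃ / 6 - e₂ / 2
  have hA : u 1 * u 1 = (u 2 * w 2 - u 1 * w 1) ^ 2 := by
    linear_combination (3 / 2 + (w 2 * w 2 - w 1 * w 1) / 2) * e₂
      - (1 / 3 + (w 2 * w 2 - w 1 * w 1) / 6) * e₃
  rw [sq, huu.mul_apply_succ, hu₀, hA', ← hA]
  ring

theorem minor_sq (huu : IsBuchiOrtho u u) (huw : IsBuchiOrtho u w)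
    (hww : IsBuchiOrtho w w) (hu₀ : u 0 = 0) (hw₀ : w 0 = 0) (i j : Fin 5) :
    (u i.succ * w j.succ - u j.succ * w i.succ) ^ 2 =
      ((i : k) + j - 2 * i * j) * (u 1 * w 2 - u 2 * w 1) ^ 2 := by
  have expand : (u i.succ * w j.succ - u j.succ * w i.succ) ^ 2 =
      (u i.succ * u i.succ) * (w j.succ * w j.succ) + (u j.succ * u j.succ) * (w i.succ * w i.succ)
        - 2 * (u i.succ * w i.succ) * (u j.succ * w j.succ) := by ring
  rw [expand, huu.mul_apply_succ i, huu.mul_apply_succ j, hww.mul_apply_succ i,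
    hww.mul_apply_succ j, huw.mul_apply_succ i, huw.mul_apply_succ j, hu₀, hw₀]
  ring

theorem mem_span_singleton [CharZero k] (huu : IsBuchiOrtho u u) (huw : IsBuchiOrtho u w)
    (hww : IsBuchiOrtho w w) (hu : u ≠ 0) (hu₀ : u 0 = 0) (hw₀ : w 0 = 0) :
    w ∈ k ∙ u := by
  have hD : u 1 * w 2 - u 2 * w 1 = 0 := by
    have h := minor_sq huu huw hww hu₀ hw₀ 2 2
    norm_num at h
    exact h
  have minor (i j : Fin 5) : u i.succ * w j.succ = u j.succ * w i.succ := by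
    simpa [hD, sub_eq_zero] using minor_sq huu huw hww hu₀ hw₀ i j
  obtain ⟨j, hj⟩ := Fin.exists_succ_ne_zero hu₀ hu
  refine Submodule.mem_span_singleton.mpr ⟨w j.succ / u j.succ, funext fun i => ?_⟩
  refine Fin.cases ?_ (fun i => ?_) i
  · simp [hu₀, hw₀]
  · simp only [Pi.smul_apply, smul_eq_mul]
    field_simp
    linear_combination minor i j

theorem exists_span_buchiLine_le [CharZero k] (huu : IsBuchiOrtho u u) (huw : IsBuchiOrtho u w)
    (hww : IsBuchiOrtho w w) 
    (hu : u ≠ 0) (hu₀ : u 0 = 0) (hw₀ : w 0 = 1) :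
    ∃ ε : Fin 5 → k, (∀ j, ε j = 1 ∨ ε j = -1) ∧
      span k {buchiLineDir ε, buchiLinePt ε} ≤ span k {u, w} := by
  set n := u 2 * w 2 - u 1 * w 1
  have hsq : ∀ j : Fin 5, u j.succ ^ 2 = n ^ 2 := sq_apply_succ huu huw hww hu₀ hw₀
  have hn : n ≠ 0 := by
    obtain ⟨j, hj⟩ := Fin.exists_succ_ne_zero hu₀ hu
    intro h
    exact hj (by simpa [h] using hsq j)
  set ε : Fin 5 → k := fun j : Fin 5 => u j.succ / n
  have hd : buchiLineDir ε = n⁻¹ • u := by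
    funext i
    refine Fin.cases ?_ (fun j => ?_) i
    · simp [hu₀]
    · simp only [buchiLineDir_succ, Pi.smul_apply, smul_eq_mul, ε]
      ring
  have hp : buchiLinePt ε = w - (u 1 * w 1 / n - 1) • buchiLineDir ε := by
    funext i
    refine Fin.cases ?_ (fun j => ?_) i
    · simp [hw₀]
    · have huw_j := huw.mul_apply_succ j
      rw [hu₀, zero_mul, mul_zero, add_zero] at huw_j
      simp only [buchiLinePt_succ, buchiLineDir_succ, Pi.sub_apply, Pi.smul_apply, smul_eq_mul, ε]
      field_simp
      linear_combination w j.succ * hsq j - u j.succ * huw_j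
  refine ⟨ε, fun j => sq_eq_one_iff.mp (by simp [ε, div_pow, hsq j, hn]), span_le.mpr ?_⟩
  have hd_mem : buchiLineDir ε ∈ span k {u, w} := hd ▸ smul_mem _ _ (subset_span (by simp))
  rintro _ (rfl | rfl)
  · exact hd_mem
  · rw [hp]
    exact sub_mem (subset_span (by simp)) (smul_mem _ _ hd_mem)

end IsBuchiOrtho

end

theorem buchi_K3_lines_general {k : Type*} [Field k] [CharZero k]
    (W : Submodule k (Fin 6 → k)) (hW : Module.finrank k W = 2) :
    (∀ v ∈ W,
        v 3 ^ 2 - 2 * v 2 ^ 2 + v 1 ^ 2 - 2 * v 0 ^ 2 = 0 ∧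
        v 4 ^ 2 - 2 * v 3 ^ 2 + v 2 ^ 2 - 2 * v 0 ^ 2 = 0 ∧
        v 5 ^ 2 - 2 * v 4 ^ 2 + v 3 ^ 2 - 2 * v 0 ^ 2 = 0) ↔
      ∃ ε : Fin 5 → k, (∀ i, ε i = 1 ∨ ε i = -1) ∧
        W = Submodule.span k {buchiLineDir ε, buchiLinePt ε} := by
  simp only [← isBuchiOrtho_self_iff]
  refine ⟨fun H => ?_, ?_⟩
  · have hortho : ∀ u ∈ W, ∀ w ∈ W, IsBuchiOrtho u w := fun u hu w hw =>
      .of_add (H u hu) (H w hw) (H _ (add_mem hu hw))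
    obtain ⟨u, huW, hu, hu₀⟩ :=
      exists_mem_ne_zero_apply_eq_zero (W := W) (by omega) (LinearMap.proj 0)
    by_cases hinf : ∀ v ∈ W, v 0 = 0
    · have hle : W ≤ k ∙ u := fun w hw =>
        (hortho u huW u huW).mem_span_singleton (hortho u huW w hw) (hortho w hw w hw) hu hu₀
          (hinf w hw)
      have := finrank_mono hle
      rw [hW, finrank_span_singleton hu] at this
      omega
    push Not at hinf
    obtain ⟨v, hvW, hv₀⟩ := hinf
    have hwW : (v 0)⁻¹ • v ∈ W := smul_mem _ _ hvW
    obtain ⟨ε, hε, hle⟩ := (hortho u huW u huW).exists_span_buchiLine_le (hortho u huW _ hwW)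
      (hortho _ hwW _ hwW) hu hu₀ (by simp [hv₀])
    refine ⟨ε, hε, (eq_of_le_of_finrank_eq (hle.trans (span_le.mpr ?_)) ?_).symm⟩
    · rintro _ (rfl | rfl)
      exacts [huW, hwW]
    · rw [finrank_span_buchiLine (by rcases hε 0 with h | h <;> simp [h]), hW]
  · rintro ⟨ε, hε, rfl⟩ v hv
    exact isBuchiOrtho_self_of_mem_span (fun j => sq_eq_one_iff.mpr (hε j)) hv

/-- Over an algebraically closed field of characteristic zero, a
`2`-dimensional linear subspace `W ⊆ k⁶` lies in the common zero locus of the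
three Büchi quadrics
`x₃² − 2x₂² + x₁² − 2x₀²`, `x₄² − 2x₃² + x₂² − 2x₀²`, `x₅² − 2x₄² + x₃² − 2x₀²`
if and only if there is a sign vector `ε ∈ {±1}⁵` with
`W = span {(0,ε₁,…,ε₅), (1, 1ε₁, 2ε₂, 3ε₃, 4ε₄, 5ε₅)}`; i.e. the Büchi K3
surface `X₅` contains exactly the `32` lines `x_i = ε_i (t + i)`. -/
theorem buchi_K3_lines {k : Type*} [Field k] [IsAlgClosed k] [CharZero k]
    (W : Submodule k (Fin 6 → k)) (hW : Module.finrank k W = 2) :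
    (∀ v ∈ W,
        v 3 ^ 2 - 2 * v 2 ^ 2 + v 1 ^ 2 - 2 * v 0 ^ 2 = 0 ∧
        v 4 ^ 2 - 2 * v 3 ^ 2 + v 2 ^ 2 - 2 * v 0 ^ 2 = 0 ∧
        v 5 ^ 2 - 2 * v 4 ^ 2 + v 3 ^ 2 - 2 * v 0 ^ 2 = 0) ↔
      ∃ ε : Fin 5 → k, (∀ i, ε i = 1 ∨ ε i = -1) ∧
        W = Submodule.span k {buchiLineDir ε, buchiLinePt ε} :=
  buchi_K3_lines_general W hW
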